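/- Let V and W be infinite disjoint sets with V ∪ W = ℕ. In any 2-edge-colouring of the complete bipartite graph K_{V,W}, there exists a monochromatic path P with d̄(P) ≥ 1/2. -/

import Mathlib

/-!
Fix a nonprincipal ultrafilter `P` on `W` and give each `v ∈ V` the colour of `P`-almost all of
its edges; one of these majority classes, `A_r`, is infinite, and a nonprincipal ultrafilter `Q`
on `A_r` splits `W` into majority classes `B_r`, `B_b` in the same way.

Call a set robustly connected in a colour if any two of its points are joined by paths of that
colour avoiding any prescribed finite set. An infinite such set lies on a single infinite
monochromatic path, obtained by extending a finite path to each of its points in turn. Two vertices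
of the same majority colour have ultrafilter-many common neighbours of that colour, so
`A_r ∪ B_r` is robustly connected in colour `r`, and `A_b`, `B_b` are in colour `b`. Either `A_b`
and `B_b` are robustly linked in colour `b`, or after deleting a finite set every edge between them
has colour `r`. Either way two robustly connected sets cover all but finitely many vertices, and
as upper density is subadditive, one of them has upper density at least `1/2`.
-/

open Filter

/-- Upper density of a set of positive integers:
`limsup_{n→∞} |A ∩ {1,…,n}| / n`. -/
noncomputable def upperDensity (A : Set ℕ+) : ℝ :=
  Filter.limsup (fun n : ℕ => (Nat.card {a : ℕ+ // a ∈ A ∧ (a : ℕ) ≤ n} : ℝ) / n) Filter.atTop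

/-- Adjacency in the complete bipartite graph with parts `V` and `W`. -/
def bipAdj (V W : Set ℕ+) (x y : ℕ+) : Prop :=
  (x ∈ V ∧ y ∈ W) ∨ (x ∈ W ∧ y ∈ V)

/-- Adjacency in the complete graph on the positive integers. -/
def completeAdj (x y : ℕ+) : Prop := x ≠ y

/-- `P` is the vertex set of a (finite or one-way infinite) path of colour `i`
in the graph with adjacency `Adj`, whose edges are coloured by `c`. -/
def IsMonoPath {k : ℕ} (Adj : ℕ+ → ℕ+ → Prop) (c : Sym2 ℕ+ → Fin k) (i : Fin k)
    (P : Set ℕ+) : Prop :=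
  (∃ (n : ℕ) (f : Fin n → ℕ+), Function.Injective f ∧
    (∀ (j : ℕ) (h : j + 1 < n),
      Adj (f ⟨j, Nat.lt_of_succ_lt h⟩) (f ⟨j + 1, h⟩) ∧
      c s(f ⟨j, Nat.lt_of_succ_lt h⟩, f ⟨j + 1, h⟩) = i) ∧
    P = Set.range f) ∨
  (∃ f : ℕ → ℕ+, Function.Injective f ∧
    (∀ j : ℕ, Adj (f j) (f (j + 1)) ∧ c s(f j, f (j + 1)) = i) ∧
    P = Set.range f)

open Set

section Density

noncomputable def countUpTo (A : Set ℕ+) (n : ℕ) : ℕ :=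
  Nat.card {a : ℕ+ // a ∈ A ∧ (a : ℕ) ≤ n}

noncomputable def partialDensity (A : Set ℕ+) (n : ℕ) : ℝ :=
  countUpTo A n / n

theorem upperDensity_eq_limsup (A : Set ℕ+) :
    upperDensity A = limsup (partialDensity A) atTop := rfl

theorem countUpTo_eq_ncard (A : Set ℕ+) (n : ℕ) :
    countUpTo A n = (A ∩ {a | (a : ℕ) ≤ n}).ncard :=
  Nat.card_coe_set_eq _

theorem PNat.finite_setOf_coe_le (n : ℕ) : {a : ℕ+ | (a : ℕ) ≤ n}.Finite :=
  (finite_Iic n).preimage PNat.coe_injective.injOn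

theorem PNat.ncard_setOf_coe_le (n : ℕ) : {a : ℕ+ | (a : ℕ) ≤ n}.ncard = n := by
  have himage : PNat.val '' {a : ℕ+ | (a : ℕ) ≤ n} = Icc 1 n := by
    ext m
    refine ⟨?_, fun hm => ⟨⟨m, hm.1⟩, hm.2, rfl⟩⟩
    rintro ⟨a, ha, rfl⟩
    exact ⟨a.pos, ha⟩
  rw [← ncard_image_of_injective _ PNat.coe_injective, himage, ← Finset.coe_Icc,
    ncard_coe_finset, Nat.card_Icc, Nat.add_sub_cancel]

theorem countUpTo_mono {A B : Set ℕ+} (h : A ⊆ B) (n : ℕ) : countUpTo A n ≤ countUpTo B n := by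
  simp only [countUpTo_eq_ncard]
  exact ncard_le_ncard (inter_subset_inter_left _ h)
    ((PNat.finite_setOf_coe_le n).inter_of_right B)

theorem countUpTo_le (A : Set ℕ+) (n : ℕ) : countUpTo A n ≤ n := by
  simpa [countUpTo_eq_ncard, PNat.ncard_setOf_coe_le] using countUpTo_mono (subset_univ A) n

theorem countUpTo_univ (n : ℕ) : countUpTo univ n = n := by
  simp [countUpTo_eq_ncard, PNat.ncard_setOf_coe_le]

theorem countUpTo_union_le (A B : Set ℕ+) (n : ℕ) :
    countUpTo (A ∪ B) n ≤ countUpTo A n + countUpTo B n := by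
  simp only [countUpTo_eq_ncard, union_inter_distrib_right]
  exact ncard_union_le _ _

theorem countUpTo_le_ncard {A : Set ℕ+} (hA : A.Finite) (n : ℕ) : countUpTo A n ≤ A.ncard := by
  rw [countUpTo_eq_ncard]
  exact ncard_le_ncard inter_subset_left hA

theorem partialDensity_nonneg (A : Set ℕ+) (n : ℕ) : 0 ≤ partialDensity A n := by
  unfold partialDensity; positivity

theorem partialDensity_le_one (A : Set ℕ+) (n : ℕ) : partialDensity A n ≤ 1 :=
  div_le_one_of_le₀ (by exact_mod_cast countUpTo_le A n) n.cast_nonneg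

theorem isBoundedUnder_le_partialDensity (A : Set ℕ+) :
    IsBoundedUnder (· ≤ ·) atTop (partialDensity A) :=
  isBoundedUnder_of ⟨1, partialDensity_le_one A⟩

theorem isBoundedUnder_ge_partialDensity (A : Set ℕ+) :
    IsBoundedUnder (· ≥ ·) atTop (partialDensity A) :=
  isBoundedUnder_of ⟨0, partialDensity_nonneg A⟩

theorem upperDensity_mono {A B : Set ℕ+} (h : A ⊆ B) : upperDensity A ≤ upperDensity B :=
  limsup_le_limsup (Eventually.of_forall fun n =>
      div_le_div_of_nonneg_right (by exact_mod_cast countUpTo_mono h n) n.cast_nonneg)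
    (isBoundedUnder_ge_partialDensity A).isCoboundedUnder_le
    (isBoundedUnder_le_partialDensity B)

theorem upperDensity_union_le (A B : Set ℕ+) :
    upperDensity (A ∪ B) ≤ upperDensity A + upperDensity B := by
  have hle : partialDensity (A ∪ B) ≤ partialDensity A + partialDensity B := fun n => by
    simp only [Pi.add_apply, partialDensity, ← add_div]
    exact div_le_div_of_nonneg_right (by exact_mod_cast countUpTo_union_le A B n) n.cast_nonneg
  calc upperDensity (A ∪ B) ≤ limsup (partialDensity A + partialDensity B) atTop :=
        limsup_le_limsup (Eventually.of_forall hle)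
          (isBoundedUnder_ge_partialDensity _).isCoboundedUnder_le
          (isBoundedUnder_le_add (isBoundedUnder_le_partialDensity A)
            (isBoundedUnder_le_partialDensity B))
    _ ≤ upperDensity A + upperDensity B :=
        limsup_add_le (isBoundedUnder_ge_partialDensity A) (isBoundedUnder_le_partialDensity A)
          (isBoundedUnder_ge_partialDensity B).isCoboundedUnder_le
          (isBoundedUnder_le_partialDensity B)

theorem upperDensity_univ : upperDensity univ = 1 := by
  rw [upperDensity_eq_limsup, limsup_congr (f := atTop) (v := fun _ => 1), limsup_const]
  filter_upwards [eventually_ne_atTop 0] with n hn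
  rw [partialDensity, countUpTo_univ, div_self (Nat.cast_ne_zero.mpr hn)]

theorem Set.Finite.upperDensity_eq_zero {A : Set ℕ+} (hA : A.Finite) : upperDensity A = 0 := by
  rw [upperDensity_eq_limsup]
  refine Tendsto.limsup_eq (tendsto_of_tendsto_of_tendsto_of_le_of_le tendsto_const_nhds
    (tendsto_const_div_atTop_nhds_zero_nat (A.ncard : ℝ)) (partialDensity_nonneg A) fun n => ?_)
  exact div_le_div_of_nonneg_right (Nat.cast_le.mpr (countUpTo_le_ncard hA n)) n.cast_nonneg

theorem Set.infinite_of_upperDensity_pos {A : Set ℕ+} (h : 0 < upperDensity A) : A.Infinite :=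
  fun hA => h.ne' hA.upperDensity_eq_zero

theorem one_le_upperDensity_add {S T : Set ℕ+} (h : (S ∪ T)ᶜ.Finite) :
    1 ≤ upperDensity S + upperDensity T :=
  calc 1 = upperDensity ((S ∪ T) ∪ (S ∪ T)ᶜ) := by rw [union_compl_self, upperDensity_univ]
    _ ≤ upperDensity (S ∪ T) + upperDensity (S ∪ T)ᶜ := upperDensity_union_le _ _
    _ ≤ upperDensity S + upperDensity T := by
        rw [h.upperDensity_eq_zero, add_zero]; exact upperDensity_union_le S T

end Density

section Paths

variable {α : Type*} {R : α → α → Prop} {F G S T X Y : Set α} {x y z : α}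

def JoinsAvoiding (R : α → α → Prop) (F : Set α) (x y : α) : Prop :=
  ∃ m : List α, (x :: (m ++ [y])).IsChain R ∧ (x :: (m ++ [y])).Nodup ∧ ∀ w ∈ m, w ∉ F

def RobustlyConnected (R : α → α → Prop) (S : Set α) : Prop :=
  S.Pairwise fun x y => ∀ F : Set α, F.Finite → JoinsAvoiding R F x y

namespace JoinsAvoiding

theorem mono (h : JoinsAvoiding R G x y) (hFG : F ⊆ G) : JoinsAvoiding R F x y :=
  let ⟨m, hc, hn, hm⟩ := h
  ⟨m, hc, hn, fun w hw hwF => hm w hw (hFG hwF)⟩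

theorem symm (hR : Std.Symm R) (h : JoinsAvoiding R F x y) : JoinsAvoiding R F y x := by
  obtain ⟨m, hc, hn, hm⟩ := h
  have hrev : y :: (m.reverse ++ [x]) = (x :: (m ++ [y])).reverse := by simp
  refine ⟨m.reverse, ?_, ?_, fun w hw => hm w (List.mem_reverse.mp hw)⟩
  · rw [hrev, List.isChain_reverse]
    exact hc.imp fun a b h => hR.symm a b h
  · rw [hrev]
    exact List.nodup_reverse.mpr hn

theorem of_adj (h : R x y) (hxy : x ≠ y) : JoinsAvoiding R F x y :=
  ⟨[], by simpa using h, by simpa using hxy, by simp⟩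

theorem of_infinite_common (h : {w | R x w ∧ R w y}.Infinite) (hxy : x ≠ y) (hF : F.Finite) :
    JoinsAvoiding R F x y := by
  obtain ⟨w, ⟨hxw, hwy⟩, hw⟩ := h.exists_notMem_finite ((hF.insert x).insert y)
  simp only [mem_insert_iff, not_or] at hw
  exact ⟨[w], by simp [List.isChain_cons_cons, hxw, hwy], by simp [hxy, Ne.symm hw.2.1, hw.1],
    by simpa using hw.2.2⟩

/-- The second path is chosen after the first, so that it can avoid it. -/
theorem trans (h₁ : JoinsAvoiding R (F ∪ {z}) x y) (hy : y ∉ F) (hxz : x ≠ z)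
    (h₂ : ∀ G : Set α, G.Finite → JoinsAvoiding R G y z) (hF : F.Finite) :
    JoinsAvoiding R F x z := by
  obtain ⟨m₁, hc₁, hn₁, hm₁⟩ := h₁
  obtain ⟨m₂, hc₂, hn₂, hm₂⟩ :=
    h₂ (insert x (F ∪ {w | w ∈ m₁})) ((hF.union (List.finite_toSet m₁)).insert x)
  have hsplit : x :: (m₁ ++ y :: m₂ ++ [z]) = x :: (m₁ ++ [y]) ++ (m₂ ++ [z]) := by simp
  refine ⟨m₁ ++ y :: m₂, ?_, ?_, ?_⟩
  · have := hc₁.append_overlap (l₁ := x :: m₁) (l₂ := [y]) (l₃ := m₂ ++ [z]) (by simpa using hc₂)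
      (List.cons_ne_nil _ _)
    simpa using this
  · rw [hsplit, List.nodup_append]
    refine ⟨hn₁, hn₂.of_cons, ?_⟩
    simp only [mem_insert_iff, mem_union, mem_ofPred_eq, not_or] at hm₂
    simp only [List.mem_cons, List.mem_append, List.not_mem_nil, or_false] at hm₁ ⊢
    rintro a (rfl | ha | rfl) b (hb | rfl) rfl
    · exact (hm₂ a hb).1 rfl
    · exact hxz rfl
    · exact (hm₂ a hb).2.2 ha
    · exact (hm₁ a ha) (Or.inr rfl)
    · exact (List.nodup_cons.mp hn₂).1 (List.mem_append_left _ hb)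
    · exact (List.nodup_cons.mp hn₂).1 (List.mem_append_right _ (List.mem_singleton_self _))
  · simp only [List.mem_append, List.mem_cons]
    rintro w (hw | rfl | hw)
    · exact fun hwF => hm₁ w hw (Or.inl hwF)
    · exact hy
    · exact fun hwF => (hm₂ w hw) (Or.inr (Or.inl hwF))

end JoinsAvoiding

namespace RobustlyConnected

theorem of_infinite_common (h : S.Pairwise fun x y => {w | R x w ∧ R w y}.Infinite) :
    RobustlyConnected R S :=
  fun _ hx _ hy hxy _ hF => .of_infinite_common (h hx hy hxy) hxy hF

theorem union (hR : Std.Symm R) (hS : RobustlyConnected R S) (hT : RobustlyConnected R T)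
    (hST : ∀ x ∈ S, ∀ y ∈ T, x ≠ y → ∀ F : Set α, F.Finite → JoinsAvoiding R F x y) :
    RobustlyConnected R (S ∪ T) := by
  rintro x (hx | hx) y (hy | hy) hxy F hF
  · exact hS hx hy hxy F hF
  · exact hST x hx y hy hxy F hF
  · exact (hST y hy x hx hxy.symm F hF).symm hR
  · exact hT hx hy hxy F hF

theorem joinsAvoiding_of_infinite_adj (hS : RobustlyConnected R S)
    (hy : {s ∈ S | R s y}.Infinite) (hx : x ∈ S) (hxy : x ≠ y) (hF : F.Finite) :
    JoinsAvoiding R F x y := by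
  obtain ⟨s, ⟨hs, hsy⟩, hsF⟩ := hy.exists_notMem_finite ((hF.insert x).insert y)
  simp only [mem_insert_iff, not_or] at hsF
  exact (hS hx hs (Ne.symm hsF.2.1) _ (hF.union (finite_singleton y))).trans hsF.2.2 hxy
    (fun _ _ => .of_adj hsy hsF.1) hF

theorem union_of_infinite_adj (hR : Std.Symm R) (hS : RobustlyConnected R S)
    (hT : RobustlyConnected R T) (h : ∀ y ∈ T, {s ∈ S | R s y}.Infinite) :
    RobustlyConnected R (S ∪ T) :=
  hS.union hR hT fun _ hx y hy hxy _ hF => hS.joinsAvoiding_of_infinite_adj (h y hy) hx hxy hF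

theorem union_of_linked (hR : Std.Symm R) (hS : RobustlyConnected R S)
    (hT : RobustlyConnected R T)
    (hlink : ∀ F : Set α, F.Finite →
      ∃ x₀ ∈ S, ∃ y₀ ∈ T, x₀ ∉ F ∧ y₀ ∉ F ∧ JoinsAvoiding R F x₀ y₀) :
    RobustlyConnected R (S ∪ T) := by
  refine hS.union hR hT fun x hx y hy hxy F hF => ?_
  -- route `x ⇝ x₀ ⇝ y₀ ⇝ y`, with `x₀ ⇝ y₀` taken from `hlink` and avoiding `x` and `y`
  obtain ⟨x₀, hx₀, y₀, hy₀, hx₀F, hy₀F, h₀⟩ := hlink (F ∪ {x, y}) (hF.union (toFinite _))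
  simp only [mem_union, mem_insert_iff, mem_singleton_iff, not_or] at hx₀F hy₀F
  have hFx : (F ∪ {x}).Finite := hF.union (finite_singleton x)
  have h₀y : JoinsAvoiding R (F ∪ {x}) x₀ y :=
    (h₀.mono (by intro w; simp; tauto)).trans (by simp [hy₀F.1, hy₀F.2.1]) hx₀F.2.2
      (hT hy₀ hy hy₀F.2.2) hFx
  exact ((h₀y.symm hR).trans hx₀F.1 hxy.symm
    (fun G hG => (hS hx hx₀ (Ne.symm hx₀F.2.1) G hG).symm hR) hF).symm hR

theorem union_of_forall_adj (hR : Std.Symm R) (hX : X.Infinite) (hY : Y.Infinite)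
    (h : ∀ x ∈ X, ∀ y ∈ Y, R x y) : RobustlyConnected R (X ∪ Y) := by
  have hXrob : RobustlyConnected R X := of_infinite_common fun _ hx _ hx' _ =>
    hY.mono fun _ hy => ⟨h _ hx _ hy, hR.symm _ _ (h _ hx' _ hy)⟩
  have hYrob : RobustlyConnected R Y := of_infinite_common fun _ hy _ hy' _ =>
    hX.mono fun _ hx => ⟨hR.symm _ _ (h _ hx _ hy), h _ hx _ hy'⟩
  exact hXrob.union hR hYrob fun _ hx _ hy hxy _ _ => .of_adj (h _ hx _ hy) hxy

end RobustlyConnected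

end Paths

section Cover

variable {α : Type*} {R : α → α → Prop} {S : Set α}

def IsPathEndingIn (R : α → α → Prop) (S : Set α) (l : List α) : Prop :=
  l.IsChain R ∧ l.Nodup ∧ ∃ e ∈ S, l.getLast? = some e

theorem RobustlyConnected.exists_extension (hS : RobustlyConnected R S) {l : List α}
    (hl : IsPathEndingIn R S l) {t : α} (ht : t ∈ S) :
    ∃ l', IsPathEndingIn R S l' ∧ l <+: l' ∧ t ∈ l' := by
  by_cases htl : t ∈ l
  · exact ⟨l, hl, List.prefix_refl l, htl⟩
  obtain ⟨hc, hn, e, he, hle⟩ := hl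
  have hel : e ∈ l := List.mem_of_getLast? hle
  obtain ⟨m, hcm, hnm, hm⟩ :=
    hS he ht (fun het => htl (het ▸ hel)) {w | w ∈ l} (List.finite_toSet l)
  obtain ⟨he_m, hcm⟩ := List.isChain_cons.mp hcm
  refine ⟨l ++ (m ++ [t]), ⟨?_, ?_, t, ht, by simp⟩, List.prefix_append _ _, by simp⟩
  · refine List.isChain_append.mpr ⟨hc, hcm, fun a ha b hb => ?_⟩
    rw [hle, Option.mem_some_iff] at ha
    exact ha ▸ he_m b hb
  · refine List.nodup_append.mpr ⟨hn, hnm.of_cons, ?_⟩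
    simp only [List.mem_append, List.mem_singleton]
    rintro a ha b (hb | rfl) rfl
    exacts [hm a hb ha, htl ha]

theorem List.isPrefix_of_forall_prefix_succ {L : ℕ → List α} (hL : ∀ k, L k <+: L (k + 1))
    {j k : ℕ} (hjk : j ≤ k) : L j <+: L k := by
  induction hjk with
  | refl => exact List.prefix_refl _
  | step _ ih => exact ih.trans (hL _)

theorem RobustlyConnected.exists_prefix_chain (hS : RobustlyConnected R S) {g : ℕ → α}
    (hgS : ∀ k, g k ∈ S) :
    ∃ L : ℕ → List α, (∀ k, IsPathEndingIn R S (L k)) ∧ (∀ k, L k <+: L (k + 1)) ∧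
      ∀ k, g k ∈ L k := by
  choose next hnext hpre hmem using fun (p : {l // IsPathEndingIn R S l}) (k : ℕ) =>
    hS.exists_extension p.2 (hgS k)
  let L : ℕ → {l // IsPathEndingIn R S l} := fun k => Nat.rec
    ⟨[g 0], List.isChain_singleton _, List.nodup_singleton _, g 0, hgS 0, rfl⟩
    (fun k p => ⟨next p (k + 1), hnext p (k + 1)⟩) k
  refine ⟨fun k => (L k).1, fun k => (L k).2, fun k => hpre _ _, fun k => ?_⟩
  cases k <;> simp [L, hmem]

theorem exists_injective_isChain_of_forall_prefix_succ {L : ℕ → List α}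
    (hL : ∀ k, L k <+: L (k + 1)) (hlen : ∀ k, k < (L k).length) (hn : ∀ k, (L k).Nodup)
    (hc : ∀ k, (L k).IsChain R) :
    ∃ f : ℕ → α, Function.Injective f ∧ (∀ j, R (f j) (f (j + 1))) ∧
      ∀ k, ∀ a ∈ L k, a ∈ range f := by
  have hf : ∀ {k n} (h : n < (L k).length), (L k)[n] = (L n)[n]'(hlen n) := fun {k n} h => by
    rcases le_total k n with hkn | hnk
    · exact (List.isPrefix_of_forall_prefix_succ hL hkn).getElem h
    · exact ((List.isPrefix_of_forall_prefix_succ hL hnk).getElem (hlen n)).symm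
  refine ⟨fun n => (L n)[n]'(hlen n), fun m n hmn => ?_, fun j => ?_, fun k a ha => ?_⟩
  · have hm : m < (L (max m n)).length := (hlen _).trans_le' (le_max_left m n)
    have hn' : n < (L (max m n)).length := (hlen _).trans_le' (le_max_right m n)
    exact (hn _).getElem_inj_iff.mp ((hf hm).trans (hmn.trans (hf hn').symm))
  · have h := List.isChain_iff_getElem.mp (hc (j + 1)) j (hlen _)
    have hj : (L (j + 1))[j]'(Nat.lt_of_succ_lt (hlen _)) = (L j)[j]'(hlen j) :=
      hf (k := j + 1) (n := j) (Nat.lt_of_succ_lt (hlen _))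
    rw [hj] at h
    exact h
  · obtain ⟨n, hn, rfl⟩ := List.getElem_of_mem ha
    exact ⟨n, (hf hn).symm⟩

theorem RobustlyConnected.exists_injective_isChain_superset (hS : RobustlyConnected R S)
    (hinf : S.Infinite) (hcount : S.Countable) :
    ∃ f : ℕ → α, Function.Injective f ∧ (∀ j, R (f j) (f (j + 1))) ∧ S ⊆ range f := by
  classical
  have := hinf.to_subtype
  have := hcount.to_subtype
  obtain ⟨_⟩ := nonempty_denumerable S
  set g : ℕ → α := fun k => ((Denumerable.eqv S).symm k : α)
  have hg : Function.Injective g := Subtype.val_injective.comp (Denumerable.eqv S).symm.injective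
  have hrange : S ⊆ range g := fun s hs => ⟨Denumerable.eqv S ⟨s, hs⟩, by simp [g]⟩
  obtain ⟨L, hLS, hL, hgL⟩ := hS.exists_prefix_chain fun k => ((Denumerable.eqv S).symm k).2
  have hlen : ∀ k, k < (L k).length := fun k => by
    have hsub : (Finset.range (k + 1)).image g ⊆ (L k).toFinset := fun a ha => by
      obtain ⟨j, hj, rfl⟩ := Finset.mem_image.mp ha
      exact List.mem_toFinset.mpr ((List.isPrefix_of_forall_prefix_succ hL
        (Nat.lt_succ_iff.mp (Finset.mem_range.mp hj))).subset (hgL j))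
    have := Finset.card_le_card hsub
    rwa [Finset.card_image_of_injective _ hg, Finset.card_range,
      List.toFinset_card_of_nodup (hLS k).2.1] at this
  obtain ⟨f, hf, hfc, hLf⟩ := exists_injective_isChain_of_forall_prefix_succ hL hlen
    (fun k => (hLS k).2.1) (fun k => (hLS k).1)
  refine ⟨f, hf, hfc, fun s hs => ?_⟩
  obtain ⟨k, rfl⟩ := hrange hs
  exact hLf k _ (hgL k)

end Cover

section Colouring

variable {α : Type*} {k : ℕ}

def colourAdj (Adj : α → α → Prop) (c : Sym2 α → Fin k) (i : Fin k) (x y : α) : Prop :=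
  Adj x y ∧ c s(x, y) = i

theorem colourAdj_symm {Adj : α → α → Prop} (hAdj : Std.Symm Adj) (c : Sym2 α → Fin k)
    (i : Fin k) : Std.Symm (colourAdj Adj c i) :=
  ⟨fun _ _ h => ⟨hAdj.symm _ _ h.1, Sym2.eq_swap ▸ h.2⟩⟩

theorem bipAdj_symm (V W : Set ℕ+) : Std.Symm (bipAdj V W) :=
  ⟨fun _ _ h => h.symm.imp And.symm And.symm⟩

theorem RobustlyConnected.exists_isMonoPath_superset {Adj : ℕ+ → ℕ+ → Prop}
    {c : Sym2 ℕ+ → Fin k} {i : Fin k} {S : Set ℕ+}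
    (hS : RobustlyConnected (colourAdj Adj c i) S) (hinf : S.Infinite) :
    ∃ P, IsMonoPath Adj c i P ∧ S ⊆ P := by
  obtain ⟨f, hf, hc, hsub⟩ := hS.exists_injective_isChain_superset hinf S.to_countable
  exact ⟨range f, Or.inr ⟨f, hf, hc, rfl⟩, hsub⟩

theorem exists_isMonoPath_half_le_upperDensity {Adj : ℕ+ → ℕ+ → Prop}
    {c : Sym2 ℕ+ → Fin k} {i j : Fin k} {S T : Set ℕ+}
    (hS : RobustlyConnected (colourAdj Adj c i) S) (hT : RobustlyConnected (colourAdj Adj c j) T)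
    (hcov : (S ∪ T)ᶜ.Finite) :
    ∃ (l : Fin k) (P : Set ℕ+), IsMonoPath Adj c l P ∧ 1 / 2 ≤ upperDensity P := by
  have dense_path : ∀ {l : Fin k} {U : Set ℕ+}, RobustlyConnected (colourAdj Adj c l) U →
      1 / 2 ≤ upperDensity U → ∃ P, IsMonoPath Adj c l P ∧ 1 / 2 ≤ upperDensity P :=
    fun hU hd =>
      let ⟨P, hP, hUP⟩ := hU.exists_isMonoPath_superset (infinite_of_upperDensity_pos (by linarith))
      ⟨P, hP, hd.trans (upperDensity_mono hUP)⟩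
  have := one_le_upperDensity_add hcov
  rcases le_total (1 / 2) (upperDensity S) with hd | hd
  · exact ⟨i, dense_path hS hd⟩
  · exact ⟨j, dense_path hT (by linarith)⟩

def majorityClass (U : Ultrafilter α) (c : Sym2 α → Fin k) (i : Fin k) : Set α :=
  {x | {y | c s(x, y) = i} ∈ U}

theorem Ultrafilter.infinite_of_mem {U : Ultrafilter α} (hU : (U : Filter α) ≤ cofinite)
    {A : Set α} (hA : A ∈ U) : A.Infinite :=
  frequently_cofinite_iff_infinite.mp
    ((Ultrafilter.frequently_iff_eventually.mpr hA).filter_mono hU)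

theorem Set.Infinite.exists_ultrafilter {A : Set α} (hA : A.Infinite) :
    ∃ U : Ultrafilter α, A ∈ U ∧ (U : Filter α) ≤ cofinite := by
  have := hA.cofinite_inf_principal_neBot
  obtain ⟨U, hU⟩ := Ultrafilter.exists_le (cofinite ⊓ 𝓟 A)
  exact ⟨U, le_principal_iff.mp (hU.trans inf_le_right), hU.trans inf_le_left⟩

theorem mem_majorityClass_or_mem_majorityClass (U : Ultrafilter α) {c : Sym2 α → Fin k}
    {r b : Fin k} (hrb : ∀ j, j = r ∨ j = b) (x : α) :
    x ∈ majorityClass U c r ∨ x ∈ majorityClass U c b :=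
  Ultrafilter.union_mem_iff.mp <| univ_mem' fun y => hrb (c s(x, y))

/-- Two vertices of the same majority colour have `U`-many common neighbours of that colour. -/
theorem robustlyConnected_inter_majorityClass {Adj : α → α → Prop} (hAdj : Std.Symm Adj)
    {U : Ultrafilter α} (hU : (U : Filter α) ≤ cofinite) {X Y : Set α} (hY : Y ∈ U)
    (hXY : ∀ x ∈ X, ∀ y ∈ Y, Adj x y) (c : Sym2 α → Fin k) (i : Fin k) :
    RobustlyConnected (colourAdj Adj c i) (X ∩ majorityClass U c i) := by
  refine .of_infinite_common fun x hx y hy _ => ?_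
  refine (U.infinite_of_mem hU (inter_mem hY (inter_mem hx.2 hy.2))).mono fun w hw => ?_
  exact ⟨⟨hXY x hx.1 w hw.1, hw.2.1⟩,
    (colourAdj_symm hAdj c i).symm _ _ ⟨hXY y hy.1 w hw.1, hw.2.2⟩⟩

end Colouring

section Bipartite

variable {α : Type*}

/-- Two robustly connected sets joined by edges of two kinds: either robust linking in the second
kind merges them, or a finite set separates them and the remaining cross edges are all of the
first kind. -/
theorem exists_robustlyConnected_union_diff_finite {R₁ R₂ : α → α → Prop} (h₁ : Std.Symm R₁)
    (h₂ : Std.Symm R₂) {X Y : Set α} (hX : RobustlyConnected R₂ X) (hY : RobustlyConnected R₂ Y)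
    (hXY : ∀ x ∈ X, ∀ y ∈ Y, x ≠ y ∧ (R₁ x y ∨ R₂ x y)) :
    ∃ Z, (RobustlyConnected R₁ Z ∨ RobustlyConnected R₂ Z) ∧ ((X ∪ Y) \ Z).Finite := by
  by_cases hXf : X.Finite
  · exact ⟨Y, Or.inr hY, hXf.subset fun z hz => hz.1.resolve_right hz.2⟩
  by_cases hYf : Y.Finite
  · exact ⟨X, Or.inr hX, hYf.subset fun z hz => hz.1.resolve_left hz.2⟩
  by_cases hlink : ∀ F : Set α, F.Finite →
      ∃ x₀ ∈ X, ∃ y₀ ∈ Y, x₀ ∉ F ∧ y₀ ∉ F ∧ JoinsAvoiding R₂ F x₀ y₀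
  · exact ⟨X ∪ Y, Or.inr (hX.union_of_linked h₂ hY hlink), by simp⟩
  push Not at hlink
  obtain ⟨F₀, hF₀, hsep⟩ := hlink
  refine ⟨(X \ F₀) ∪ (Y \ F₀), Or.inl (.union_of_forall_adj h₁ (Set.Infinite.sdiff hXf hF₀)
    (Set.Infinite.sdiff hYf hF₀) fun x hx y hy => ?_), hF₀.subset fun z hz => ?_⟩
  · obtain ⟨hxy, h | h⟩ := hXY x hx.1 y hy.1
    · exact h
    · exact absurd (.of_adj h hxy) (hsep x hx.1 y hy.1 hx.2 hy.2)
  · by_contra hzF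
    exact hz.2 (hz.1.imp (⟨·, hzF⟩) (⟨·, hzF⟩))

theorem exists_robustlyConnected_cover_of_majority {V W : Set ℕ+} (hdisj : Disjoint V W)
    (hunion : V ∪ W = univ) (c : Sym2 ℕ+ → Fin 2) {r b : Fin 2} (hrb : ∀ j, j = r ∨ j = b)
    {P : Ultrafilter ℕ+} (hP : (P : Filter ℕ+) ≤ cofinite) (hWP : W ∈ P)
    (hA : (V ∩ majorityClass P c r).Infinite) :
    ∃ (i j : Fin 2) (S T : Set ℕ+), RobustlyConnected (colourAdj (bipAdj V W) c i) S ∧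
      RobustlyConnected (colourAdj (bipAdj V W) c j) T ∧ (S ∪ T)ᶜ.Finite := by
  obtain ⟨Q, hAQ, hQ⟩ := hA.exists_ultrafilter
  have hVW : ∀ x ∈ V, ∀ y ∈ W, bipAdj V W x y := fun x hx y hy => Or.inl ⟨hx, hy⟩
  have hWV : ∀ y ∈ W, ∀ x ∈ V, bipAdj V W y x := fun y hy x hx => Or.inr ⟨hy, hx⟩
  have hsymm := colourAdj_symm (bipAdj_symm V W) c
  have hA i := robustlyConnected_inter_majorityClass (bipAdj_symm V W) hP hWP hVW c i
  have hB i := robustlyConnected_inter_majorityClass (bipAdj_symm V W) hQ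
    (mem_of_superset hAQ inter_subset_left) hWV c i
  have hS₁ := (hA r).union_of_infinite_adj (hsymm r) (hB r) fun y hy =>
    (Q.infinite_of_mem hQ (inter_mem hAQ hy.2)).mono fun v hv =>
      ⟨hv.1, hVW v hv.1.1 y hy.1, Sym2.eq_swap ▸ hv.2⟩
  obtain ⟨Z, hZ, hZfin⟩ := exists_robustlyConnected_union_diff_finite (hsymm r) (hsymm b)
    (hA b) (hB b) fun x hx y hy =>
      ⟨hdisj.ne_of_mem hx.1 hy.1,
        (hrb (c s(x, y))).imp (⟨hVW x hx.1 y hy.1, ·⟩) (⟨hVW x hx.1 y hy.1, ·⟩)⟩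
  have hcov : ((V ∩ majorityClass P c r ∪ W ∩ majorityClass Q c r) ∪ Z)ᶜ ⊆
      (V ∩ majorityClass P c b ∪ W ∩ majorityClass Q c b) \ Z := by
    intro x hx
    simp only [mem_compl_iff, mem_union, mem_inter_iff, not_or] at hx
    have hx' : x ∈ V ∪ W := hunion ▸ mem_univ x
    refine ⟨?_, hx.2⟩
    rcases hx' with hxV | hxW
    · exact Or.inl ⟨hxV, (mem_majorityClass_or_mem_majorityClass P hrb x).resolve_left
        fun h => hx.1.1 ⟨hxV, h⟩⟩
    · exact Or.inr ⟨hxW, (mem_majorityClass_or_mem_majorityClass Q hrb x).resolve_left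
        fun h => hx.1.2 ⟨hxW, h⟩⟩
  rcases hZ with hZ | hZ
  · exact ⟨r, r, _, Z, hS₁, hZ, hZfin.subset hcov⟩
  · exact ⟨r, b, _, Z, hS₁, hZ, hZfin.subset hcov⟩

theorem exists_robustlyConnected_cover {V W : Set ℕ+} (hV : V.Infinite) (hW : W.Infinite)
    (hdisj : Disjoint V W) (hunion : V ∪ W = univ) (c : Sym2 ℕ+ → Fin 2) :
    ∃ (i j : Fin 2) (S T : Set ℕ+), RobustlyConnected (colourAdj (bipAdj V W) c i) S ∧
      RobustlyConnected (colourAdj (bipAdj V W) c j) T ∧ (S ∪ T)ᶜ.Finite := by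
  obtain ⟨P, hWP, hP⟩ := hW.exists_ultrafilter
  have hsplit : V ⊆ V ∩ majorityClass P c 0 ∪ V ∩ majorityClass P c 1 := fun x hx =>
    (mem_majorityClass_or_mem_majorityClass P (by decide) x).imp (⟨hx, ·⟩) (⟨hx, ·⟩)
  rcases infinite_union.mp (hV.mono hsplit) with h | h
  · exact exists_robustlyConnected_cover_of_majority hdisj hunion c (b := 1) (by decide) hP hWP h
  · exact exists_robustlyConnected_cover_of_majority hdisj hunion c (b := 0) (by decide) hP hWP h

end Bipartite

/-- In any 2-edge-colouring of `K_{V,W}`, there is a monochromatic path of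
upper density at least `1/2`. -/
theorem stmt_4 (V W : Set ℕ+) (hV : V.Infinite) (hW : W.Infinite)
    (hdisj : Disjoint V W) (hunion : V ∪ W = Set.univ) (c : Sym2 ℕ+ → Fin 2) :
    ∃ (i : Fin 2) (P : Set ℕ+),
      IsMonoPath (bipAdj V W) c i P ∧ 1 / 2 ≤ upperDensity P := by
  obtain ⟨i, j, S, T, hS, hT, hcov⟩ := exists_robustlyConnected_cover hV hW hdisj hunion c
  exact exists_isMonoPath_half_le_upperDensity hS hT hcov
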